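/- Let ρ, σ, q : [0, ℓ] → ℝ be continuous with ρ, σ > 0 and q ≥ 0, and let λ > 0. Then the space of solutions φ ∈ C⁴([0,ℓ]) of (σ φ'')'' - (q φ')' = λ ρ φ satisfying the three boundary conditions φ(0) = φ'(0) = φ'(ℓ) = 0 is at most one-dimensional. -/

import Mathlib

/-!
Along a solution, the quasi-derivatives `(u, u', σu'', (σu'')' - qu')` solve a linear first-order
system whose coefficient matrix is entrywise nonnegative, so nonnegative data at `0` stay
nonnegative on `[0, ℓ]`: the sum of the negative parts satisfies an integral Grönwall inequality.
If in addition `(σu'')' - qu'` is positive at `0`, then it stays positive, `σu''` increases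
strictly from a nonnegative value, and so does `u'`; hence `u'(ℓ) > 0`.

Consequently a solution with `u(0) = u'(0) = u''(0) = 0` and `u'(ℓ) = 0` vanishes: its data at `0`
are `(0, 0, 0, s)`, and `s ≠ 0` would give `u'(ℓ) > 0` for `u` or for `-u`. For two solutions
`φ, ψ`, some nontrivial combination has vanishing second derivative at `0`.
-/

open Set Matrix intervalIntegral Topology

theorem eq_zero_of_le_mul_integral {F : ℝ → ℝ} {K a b : ℝ} (hF : ContinuousOn F (Icc a b))
    (hF0 : ∀ x ∈ Icc a b, 0 ≤ F x) (hle : ∀ x ∈ Icc a b, F x ≤ K * ∫ t in a..x, F t) :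
    ∀ x ∈ Icc a b, F x = 0 := by
  set G : ℝ → ℝ := fun x => ∫ t in a..x, F t
  have hint : ∀ x ∈ Icc a b, IntervalIntegrable F MeasureTheory.volume a x := fun x hx =>
    (hF.mono (by rw [uIcc_of_le hx.1]; exact Icc_subset_Icc_right hx.2)).intervalIntegrable
  have hG0 : ∀ x ∈ Icc a b, 0 ≤ G x := fun x hx =>
    integral_nonneg hx.1 fun t ht => hF0 t ⟨ht.1, ht.2.trans hx.2⟩
  have hGc : ContinuousOn G (Icc a b) := by
    rcases le_or_gt a b with hab | hab
    · exact (continuousOn_primitive_interval' (hint b ⟨hab, le_rfl⟩) left_mem_uIcc).mono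
        Icc_subset_uIcc
    · simp [Icc_eq_empty_of_lt hab]
  have hG' : ∀ x ∈ Ico a b, HasDerivWithinAt G (F x) (Ici x) x := by
    intro x hx
    have hIcc : Icc a b ∈ 𝓝[>] x := Icc_mem_nhdsGT_of_mem hx
    exact integral_hasDerivWithinAt_right (hint x (Ico_subset_Icc_self hx))
      (hF.stronglyMeasurableAtFilter_nhdsWithin measurableSet_Icc x |>.filter_mono
        (nhdsWithin_le_of_mem hIcc))
      ((hF x (Ico_subset_Icc_self hx)).mono_of_mem_nhdsWithin hIcc)
  intro x hx
  have hGx : G x = 0 := by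
    refine le_antisymm ?_ (hG0 x hx)
    simpa [gronwallBound_ε0_δ0] using
      le_gronwallBound_of_liminf_deriv_right_le (δ := 0) (ε := 0) hGc
        (fun x hx r hr => (hG' x hx).liminf_right_slope_le hr) (by simp [G])
        (fun x hx => by simpa using hle x (Ico_subset_Icc_self hx)) x hx
  have hFx : F x ≤ K * G x := hle x hx
  rw [hGx, mul_zero] at hFx
  exact le_antisymm hFx (hF0 x hx)

theorem negPart_le_integral {f f' g : ℝ → ℝ} {a b : ℝ}
    (hf : ∀ t ∈ Icc a b, HasDerivAt f (f' t) t) (hf' : ContinuousOn f' (Icc a b))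
    (hg : ContinuousOn g (Icc a b)) (hg0 : ∀ t ∈ Icc a b, 0 ≤ g t)
    (hle : ∀ t ∈ Icc a b, -f' t ≤ g t) (hfa : 0 ≤ f a) :
    ∀ x ∈ Icc a b, (f x)⁻ ≤ ∫ t in a..x, g t := by
  intro x hx
  have hsub : uIcc a x ⊆ Icc a b := by
    rw [uIcc_of_le hx.1]; exact Icc_subset_Icc_right hx.2
  have hftc : ∫ t in a..x, f' t = f x - f a :=
    integral_eq_sub_of_hasDerivAt (fun t ht => hf t (hsub ht)) (hf'.mono hsub).intervalIntegrable
  have hmono : ∫ t in a..x, -f' t ≤ ∫ t in a..x, g t :=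
    integral_mono_on hx.1 (hf'.neg.mono hsub).intervalIntegrable (hg.mono hsub).intervalIntegrable
      fun t ht => hle t (hsub (uIcc_of_le hx.1 ▸ ht))
  rw [intervalIntegral.integral_neg, hftc] at hmono
  rw [negPart_def]
  exact max_le (by linarith) (integral_nonneg hx.1 fun t ht => hg0 t (hsub (uIcc_of_le hx.1 ▸ ht)))

theorem nonneg_of_hasDerivAt_mulVec {ι : Type*} [Fintype ι] {A : ℝ → Matrix ι ι ℝ}
    {y : ℝ → ι → ℝ} {a b : ℝ}
    (hA : ∀ i j, ContinuousOn (fun t => A t i j) (Icc a b))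
    (hA0 : ∀ t ∈ Icc a b, ∀ i j, 0 ≤ A t i j)
    (hy : ∀ t ∈ Icc a b, HasDerivAt y (A t *ᵥ y t) t) (hya : 0 ≤ y a) :
    ∀ x ∈ Icc a b, 0 ≤ y x := by
  obtain ⟨K, hK0, hK⟩ : ∃ K, 0 ≤ K ∧ ∀ t ∈ Icc a b, ∀ i j, A t i j ≤ K := by
    obtain ⟨C, hC⟩ := isCompact_Icc.exists_bound_of_continuousOn
      (continuousOn_finsetSum _ fun i _ => continuousOn_finsetSum _ fun j _ => hA i j)
    refine ⟨max C 0, le_max_right _ _, fun t ht i j => ?_⟩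
    calc A t i j ≤ ∑ i', ∑ j', A t i' j' :=
          (Finset.single_le_sum (fun j' _ => hA0 t ht i j') (Finset.mem_univ j)).trans
            (Finset.single_le_sum (f := fun i' => ∑ j', A t i' j')
              (fun i' _ => Finset.sum_nonneg fun j' _ => hA0 t ht i' j') (Finset.mem_univ i))
      _ ≤ C := (Real.le_norm_self _).trans (hC t ht)
      _ ≤ max C 0 := le_max_left _ _
  have hyc : ∀ i, ContinuousOn (fun t => y t i) (Icc a b) := fun i =>
    (continuous_apply i).comp_continuousOn fun t ht => (hy t ht).continuousAt.continuousWithinAt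
  set N : ℝ → ℝ := fun t => ∑ i, (y t i)⁻
  have hNc : ContinuousOn N (Icc a b) := by
    simp only [N, negPart_def]
    exact continuousOn_finsetSum _ fun i _ => (hyc i).neg.sup continuousOn_const
  have hN0 : ∀ t, 0 ≤ N t := fun t => Finset.sum_nonneg fun i _ => negPart_nonneg _
  have hderiv : ∀ t ∈ Icc a b, ∀ i, -(A t *ᵥ y t) i ≤ K * N t := by
    intro t ht i
    simp only [mulVec, dotProduct, N, Finset.mul_sum, ← Finset.sum_neg_distrib]
    refine Finset.sum_le_sum fun j _ => ?_
    calc -(A t i j * y t j) = A t i j * -y t j := by ring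
      _ ≤ A t i j * (y t j)⁻ := mul_le_mul_of_nonneg_left (neg_le_negPart _) (hA0 t ht i j)
      _ ≤ K * (y t j)⁻ := mul_le_mul_of_nonneg_right (hK t ht i j) (negPart_nonneg _)
  have hcomp : ∀ i, ∀ x ∈ Icc a b, (y x i)⁻ ≤ ∫ t in a..x, K * N t := fun i =>
    negPart_le_integral (fun t ht => hasDerivAt_pi.1 (hy t ht) i)
      (by simp only [mulVec, dotProduct]
          exact continuousOn_finsetSum _ fun j _ => (hA i j).mul (hyc j))
      (continuousOn_const.mul hNc) (fun t _ => mul_nonneg hK0 (hN0 t))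
      (fun t ht => hderiv t ht i) (hya i)
  have hN : ∀ x ∈ Icc a b, N x = 0 := by
    refine eq_zero_of_le_mul_integral hNc (fun t _ => hN0 t) (K := Fintype.card ι * K) ?_
    intro x hx
    calc N x ≤ ∑ _i : ι, ∫ t in a..x, K * N t := Finset.sum_le_sum fun i _ => hcomp i x hx
      _ = _ := by simp [mul_assoc]
  intro x hx i
  exact negPart_eq_zero.1 <|
    (Finset.sum_eq_zero_iff_of_nonneg fun i _ => negPart_nonneg (y x i)).1 (hN x hx) i
      (Finset.mem_univ i)

theorem deriv_lincomb {f g : ℝ → ℝ} (hf : Differentiable ℝ f) (hg : Differentiable ℝ g)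
    (c d : ℝ) : deriv (fun x => c * f x + d * g x) = fun x => c * deriv f x + d * deriv g x := by
  funext x
  rw [deriv_fun_add ((hf x).const_mul c) ((hg x).const_mul d), deriv_const_mul c (hf x),
    deriv_const_mul d (hg x)]

noncomputable section

namespace Beam

variable {σ q ρ u : ℝ → ℝ} {lam ℓ : ℝ}

def moment (σ u : ℝ → ℝ) (x : ℝ) : ℝ := σ x * deriv (deriv u) x

def shear (σ q u : ℝ → ℝ) (x : ℝ) : ℝ := deriv (moment σ u) x - q x * deriv u x

def state (σ q u : ℝ → ℝ) (x : ℝ) : Fin 4 → ℝ :=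
  ![u x, deriv u x, moment σ u x, shear σ q u x]

def coeffMatrix (σ q ρ : ℝ → ℝ) (lam x : ℝ) : Matrix (Fin 4) (Fin 4) ℝ :=
  !![0, 1, 0, 0; 0, 0, (σ x)⁻¹, 0; 0, q x, 0, 1; lam * ρ x, 0, 0, 0]

theorem contDiff_moment (hσ : ContDiff ℝ 2 σ) (hu : ContDiff ℝ 4 u) :
    ContDiff ℝ 2 (moment σ u) :=
  hσ.mul hu.deriv'.deriv'

theorem contDiff_shear (hσ : ContDiff ℝ 2 σ) (hq : ContDiff ℝ 1 q) (hu : ContDiff ℝ 4 u) :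
    ContDiff ℝ 1 (shear σ q u) :=
  (contDiff_moment hσ hu).deriv'.sub (hq.mul ((hu.deriv' (n := 3)).of_le (by norm_num)))

theorem deriv_shear (hσ : ContDiff ℝ 2 σ) (hq : ContDiff ℝ 1 q) (hu : ContDiff ℝ 4 u) (x : ℝ) :
    deriv (shear σ q u) x =
      deriv (deriv (fun y => σ y * deriv (deriv u) y)) x - deriv (fun y => q y * deriv u y) x :=
  deriv_sub (((contDiff_moment hσ hu).deriv'.differentiable one_ne_zero) x)
    ((hq.mul ((hu.deriv' (n := 3)).of_le (by norm_num))).differentiable one_ne_zero x)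

theorem hasDerivAt_state (hσ : ContDiff ℝ 2 σ) (hq : ContDiff ℝ 1 q) (hu : ContDiff ℝ 4 u)
    {x : ℝ} (hσx : σ x ≠ 0) (hode : deriv (shear σ q u) x = lam * ρ x * u x) :
    HasDerivAt (state σ q u) (coeffMatrix σ q ρ lam x *ᵥ state σ q u x) x := by
  have h0 := (hu.differentiable (by norm_num) x).hasDerivAt
  have h1 := ((hu.deriv' (n := 3)).differentiable (by norm_num) x).hasDerivAt
  have h2 := ((contDiff_moment hσ hu).differentiable (by norm_num) x).hasDerivAt
  have h3 := ((contDiff_shear hσ hq hu).differentiable one_ne_zero x).hasDerivAt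
  rw [hasDerivAt_pi]
  intro i
  fin_cases i
  · exact h0.congr_deriv (by simp [state, coeffMatrix, mulVec, dotProduct, Fin.sum_univ_four])
  · exact h1.congr_deriv (by
      simp [state, coeffMatrix, mulVec, dotProduct, Fin.sum_univ_four, moment, hσx])
  · exact h2.congr_deriv (by
      simp [state, coeffMatrix, mulVec, dotProduct, Fin.sum_univ_four, shear])
  · exact h3.congr_deriv (by
      simp [state, coeffMatrix, mulVec, dotProduct, Fin.sum_univ_four, hode])

theorem state_nonneg_iff {x : ℝ} :
    0 ≤ state σ q u x ↔
      0 ≤ u x ∧ 0 ≤ deriv u x ∧ 0 ≤ moment σ u x ∧ 0 ≤ shear σ q u x := by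
  simp [Pi.le_def, Fin.forall_fin_succ, state]

theorem state_nonneg (hρc : Continuous ρ) (hσc : ContDiff ℝ 2 σ) (hqc : ContDiff ℝ 1 q)
    (hlam : 0 ≤ lam) (hρ : ∀ x ∈ Icc 0 ℓ, 0 ≤ ρ x) (hσ : ∀ x ∈ Icc 0 ℓ, 0 < σ x)
    (hq : ∀ x ∈ Icc 0 ℓ, 0 ≤ q x) (hu : ContDiff ℝ 4 u)
    (hode : ∀ x ∈ Icc 0 ℓ, deriv (shear σ q u) x = lam * ρ x * u x)
    (h0 : 0 ≤ state σ q u 0) :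
    ∀ x ∈ Icc 0 ℓ, 0 ≤ state σ q u x := by
  refine nonneg_of_hasDerivAt_mulVec (A := coeffMatrix σ q ρ lam) (fun i j => ?_)
    (fun t ht i j => ?_) (fun t ht => hasDerivAt_state hσc hqc hu (hσ t ht).ne' (hode t ht)) h0
  · have hσinv : ContinuousOn (fun t => (σ t)⁻¹) (Icc 0 ℓ) :=
      hσc.continuous.continuousOn.inv₀ fun t ht => (hσ t ht).ne'
    have hlamρ : ContinuousOn (fun t => lam * ρ t) (Icc 0 ℓ) :=
      (continuous_const.mul hρc).continuousOn
    fin_cases i <;> fin_cases j <;>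
      simp [coeffMatrix, continuousOn_const, hσinv, hqc.continuous.continuousOn, hlamρ]
  · have := hσ t ht
    have := hq t ht
    have := hρ t ht
    fin_cases i <;> fin_cases j <;> simp [coeffMatrix] <;> positivity

theorem deriv_pos_of_shear_pos (hℓ : 0 < ℓ) (hρc : Continuous ρ) (hσc : ContDiff ℝ 2 σ)
    (hqc : ContDiff ℝ 1 q) (hlam : 0 ≤ lam) (hρ : ∀ x ∈ Icc 0 ℓ, 0 ≤ ρ x)
    (hσ : ∀ x ∈ Icc 0 ℓ, 0 < σ x) (hq : ∀ x ∈ Icc 0 ℓ, 0 ≤ q x) (hu : ContDiff ℝ 4 u)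
    (hode : ∀ x ∈ Icc 0 ℓ, deriv (shear σ q u) x = lam * ρ x * u x)
    (h0 : 0 ≤ state σ q u 0) (hs : 0 < shear σ q u 0) :
    0 < deriv u ℓ := by
  have hnn := fun x hx => state_nonneg_iff.1 <|
    state_nonneg hρc hσc hqc hlam hρ hσ hq hu hode h0 x hx
  have h00 : (0 : ℝ) ∈ Icc 0 ℓ := ⟨le_rfl, hℓ.le⟩
  have hshear_mono : MonotoneOn (shear σ q u) (Icc 0 ℓ) := by
    refine monotoneOn_of_deriv_nonneg (convex_Icc 0 ℓ)
      (contDiff_shear hσc hqc hu).continuous.continuousOn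
      ((contDiff_shear hσc hqc hu).differentiable one_ne_zero).differentiableOn fun x hx => ?_
    rw [interior_Icc] at hx
    have hx := Ioo_subset_Icc_self hx
    rw [hode x hx]
    exact mul_nonneg (mul_nonneg hlam (hρ x hx)) (hnn x hx).1
  have hmoment_mono : StrictMonoOn (moment σ u) (Icc 0 ℓ) := by
    refine strictMonoOn_of_deriv_pos (convex_Icc 0 ℓ)
      (contDiff_moment hσc hu).continuous.continuousOn fun x hx => ?_
    rw [interior_Icc] at hx
    have hx := Ioo_subset_Icc_self hx
    have hsx : 0 < shear σ q u x := hs.trans_le (hshear_mono h00 hx hx.1)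
    have hqu : 0 ≤ q x * deriv u x := mul_nonneg (hq x hx) (hnn x hx).2.1
    rw [show deriv (moment σ u) x = shear σ q u x + q x * deriv u x by simp [shear]]
    positivity
  have hderiv_mono : StrictMonoOn (deriv u) (Icc 0 ℓ) := by
    refine strictMonoOn_of_deriv_pos (convex_Icc 0 ℓ)
      (hu.continuous_deriv (by norm_num)).continuousOn fun x hx => ?_
    rw [interior_Icc] at hx
    have hmx : 0 < moment σ u x :=
      (hnn 0 h00).2.2.1.trans_lt (hmoment_mono h00 (Ioo_subset_Icc_self hx) hx.1)
    have hσx := hσ x (Ioo_subset_Icc_self hx)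
    rw [show deriv (deriv u) x = moment σ u x / σ x by
      rw [moment, mul_div_cancel_left₀ _ hσx.ne']]
    positivity
  exact (hnn 0 h00).2.1.trans_lt (hderiv_mono h00 ⟨hℓ.le, le_rfl⟩ hℓ)

theorem moment_neg : moment σ (-u) = -moment σ u := by
  funext x
  simp [moment]

theorem shear_neg : shear σ q (-u) = -shear σ q u := by
  funext x
  simp [shear, moment_neg]
  ring

theorem shear_lincomb {φ ψ : ℝ → ℝ} (hσc : ContDiff ℝ 2 σ) (hφ : ContDiff ℝ 4 φ)
    (hψ : ContDiff ℝ 4 ψ) (c d : ℝ) :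
    shear σ q (fun x => c * φ x + d * ψ x) = fun x => c * shear σ q φ x + d * shear σ q ψ x := by
  have h1 := deriv_lincomb (hφ.differentiable (by norm_num)) (hψ.differentiable (by norm_num)) c d
  have h2 : deriv (deriv fun x => c * φ x + d * ψ x) =
      fun x => c * deriv (deriv φ) x + d * deriv (deriv ψ) x := by
    rw [h1]
    exact deriv_lincomb ((hφ.deriv' (n := 3)).differentiable (by norm_num))
      ((hψ.deriv' (n := 3)).differentiable (by norm_num)) c d
  have hm : moment σ (fun x => c * φ x + d * ψ x) =
      fun x => c * moment σ φ x + d * moment σ ψ x := by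
    funext x
    simp only [moment, h2]
    ring
  funext x
  simp only [shear, hm, h1, deriv_lincomb ((contDiff_moment hσc hφ).differentiable (by norm_num))
    ((contDiff_moment hσc hψ).differentiable (by norm_num)) c d]
  ring

theorem deriv_shear_lincomb {φ ψ : ℝ → ℝ} (hσc : ContDiff ℝ 2 σ) (hqc : ContDiff ℝ 1 q)
    (hφ : ContDiff ℝ 4 φ) (hψ : ContDiff ℝ 4 ψ) (c d : ℝ) :
    deriv (shear σ q (fun x => c * φ x + d * ψ x)) =
      fun x => c * deriv (shear σ q φ) x + d * deriv (shear σ q ψ) x := by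
  rw [shear_lincomb hσc hφ hψ]
  exact deriv_lincomb ((contDiff_shear hσc hqc hφ).differentiable one_ne_zero)
    ((contDiff_shear hσc hqc hψ).differentiable one_ne_zero) c d

theorem nonpos_of_boundary_of_deriv_deriv_zero (hℓ : 0 < ℓ) (hρc : Continuous ρ)
    (hσc : ContDiff ℝ 2 σ) (hqc : ContDiff ℝ 1 q) (hlam : 0 ≤ lam) (hρ : ∀ x ∈ Icc 0 ℓ, 0 ≤ ρ x)
    (hσ : ∀ x ∈ Icc 0 ℓ, 0 < σ x) (hq : ∀ x ∈ Icc 0 ℓ, 0 ≤ q x) (hu : ContDiff ℝ 4 u)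
    (hode : ∀ x ∈ Icc 0 ℓ, deriv (shear σ q u) x = lam * ρ x * u x)
    (h0 : u 0 = 0) (h1 : deriv u 0 = 0) (h2 : deriv (deriv u) 0 = 0) (hℓ' : deriv u ℓ = 0) :
    ∀ x ∈ Icc 0 ℓ, u x ≤ 0 := by
  intro x hx
  have hm : moment σ u 0 = 0 := by simp [moment, h2]
  have hs : shear σ q u 0 ≤ 0 := by
    by_contra! hs
    exact (deriv_pos_of_shear_pos hℓ hρc hσc hqc hlam hρ hσ hq hu hode
      (state_nonneg_iff.2 ⟨h0.ge, h1.ge, hm.ge, hs.le⟩) hs).ne' hℓ'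
  have hneg := state_nonneg (u := -u) hρc hσc hqc hlam hρ hσ hq hu.neg
    (fun x hx => by simp [shear_neg, hode x hx])
    (state_nonneg_iff.2 (by simp [h0, h1, moment_neg, hm, shear_neg, hs])) x hx
  simpa using (state_nonneg_iff.1 hneg).1

theorem eq_zero_of_boundary_of_deriv_deriv_zero (hℓ : 0 < ℓ) (hρc : Continuous ρ)
    (hσc : ContDiff ℝ 2 σ) (hqc : ContDiff ℝ 1 q) (hlam : 0 ≤ lam) (hρ : ∀ x ∈ Icc 0 ℓ, 0 ≤ ρ x)
    (hσ : ∀ x ∈ Icc 0 ℓ, 0 < σ x) (hq : ∀ x ∈ Icc 0 ℓ, 0 ≤ q x) (hu : ContDiff ℝ 4 u)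
    (hode : ∀ x ∈ Icc 0 ℓ, deriv (shear σ q u) x = lam * ρ x * u x)
    (h0 : u 0 = 0) (h1 : deriv u 0 = 0) (h2 : deriv (deriv u) 0 = 0) (hℓ' : deriv u ℓ = 0) :
    ∀ x ∈ Icc 0 ℓ, u x = 0 := by
  intro x hx
  have hneg := nonpos_of_boundary_of_deriv_deriv_zero (u := -u) hℓ hρc hσc hqc hlam hρ hσ hq
    hu.neg (fun x hx => by simp [shear_neg, hode x hx]) (by simp [h0]) (by simp [h1])
    (by simp [h2]) (by simp [hℓ']) x hx
  have hpos := nonpos_of_boundary_of_deriv_deriv_zero hℓ hρc hσc hqc hlam hρ hσ hq hu hode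
    h0 h1 h2 hℓ' x hx
  simp only [Pi.neg_apply] at hneg
  linarith

end Beam

end

open Beam

/-- the space of C⁴ solutions of (σφ'')'' - (qφ')' = λρφ with
φ(0) = φ'(0) = φ'(ℓ) = 0 is at most one-dimensional: any two such solutions
are linearly dependent. -/
theorem stmt_5 (ℓ : ℝ) (hℓ : 0 < ℓ) (ρ σ q : ℝ → ℝ) (lam : ℝ) (hlam : 0 < lam)
    (hρc : Continuous ρ) (hσc : ContDiff ℝ 2 σ) (hqc : ContDiff ℝ 1 q)
    (hρ : ∀ x ∈ Set.Icc 0 ℓ, 0 < ρ x)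
    (hσ : ∀ x ∈ Set.Icc 0 ℓ, 0 < σ x)
    (hq : ∀ x ∈ Set.Icc 0 ℓ, 0 ≤ q x)
    (φ ψ : ℝ → ℝ) (hφ : ContDiff ℝ 4 φ) (hψ : ContDiff ℝ 4 ψ)
    (hodeφ : ∀ x ∈ Set.Icc 0 ℓ,
      deriv (deriv (fun y => σ y * deriv (deriv φ) y)) x
        - deriv (fun y => q y * deriv φ y) x = lam * ρ x * φ x)
    (hodeψ : ∀ x ∈ Set.Icc 0 ℓ,
      deriv (deriv (fun y => σ y * deriv (deriv ψ) y)) x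
        - deriv (fun y => q y * deriv ψ y) x = lam * ρ x * ψ x)
    (hbcφ : φ 0 = 0 ∧ deriv φ 0 = 0 ∧ deriv φ ℓ = 0)
    (hbcψ : ψ 0 = 0 ∧ deriv ψ 0 = 0 ∧ deriv ψ ℓ = 0) :
    ∃ c d : ℝ, (c ≠ 0 ∨ d ≠ 0) ∧ ∀ x ∈ Set.Icc 0 ℓ, c * φ x + d * ψ x = 0 := by
  obtain ⟨hφ0, hφ'0, hφ'ℓ⟩ := hbcφ
  obtain ⟨hψ0, hψ'0, hψ'ℓ⟩ := hbcψ
  have h1 := deriv_lincomb (hφ.differentiable (by norm_num)) (hψ.differentiable (by norm_num))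
  have h2 := deriv_lincomb ((hφ.deriv' (n := 3)).differentiable (by norm_num))
    ((hψ.deriv' (n := 3)).differentiable (by norm_num))
  have hvanish : ∀ c d : ℝ, c * deriv (deriv φ) 0 + d * deriv (deriv ψ) 0 = 0 →
      ∀ x ∈ Icc 0 ℓ, c * φ x + d * ψ x = 0 := by
    intro c d hcd
    refine eq_zero_of_boundary_of_deriv_deriv_zero hℓ hρc hσc hqc hlam.le
      (fun x hx => (hρ x hx).le) hσ hq ((contDiff_const.mul hφ).add (contDiff_const.mul hψ))
      (fun x hx => ?_) (by simp [hφ0, hψ0]) (by simp [h1, hφ'0, hψ'0])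
      (by simp [h1, h2, hcd]) (by simp [h1, hφ'ℓ, hψ'ℓ])
    simp only [deriv_shear_lincomb hσc hqc hφ hψ, deriv_shear hσc hqc hφ, deriv_shear hσc hqc hψ,
      hodeφ x hx, hodeψ x hx]
    ring
  by_cases ha : deriv (deriv φ) 0 = 0
  · exact ⟨1, 0, Or.inl one_ne_zero, hvanish 1 0 (by simp [ha])⟩
  · exact ⟨deriv (deriv ψ) 0, -deriv (deriv φ) 0, Or.inr (neg_ne_zero.2 ha),
      hvanish _ _ (by ring)⟩
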